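/- arXiv:2007.05619 — 2 statements merged into one kernel-verified Lean document; each statement's English description precedes it below -/
import Mathlib

section
/- Let Δ be a finite set, k ≤ |Δ|, and suppose R ⊆ Δ × Δ and A ⊆ Δ are such that for every x ∉ A, the set {y : (x,y) ∈ R} has exactly k elements. Then the number of pairs (U, B) where U ⊆ Δ with |U| = k and B ⊆ Δ × Δ such that (i) every x ∈ Δ has exactly k B-successors, (ii) for every x ∈ A and every (x,y) ∈ B we have y ∈ U, and (iii) for every x ∉ A and every y, (x,y) ∈ R iff (x,y) ∈ B, is exactly C(|Δ|, k). -/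
/-!
Conditions (i)–(iii) determine `B` from `U`: outside `A` it agrees with `R`, and for `x ∈ A` the
`k` successors of `x` lie in the `k`-element set `U`, so they are all of `U`. Conversely, for every
`k`-subset `U` this relation satisfies (i), because every `x ∉ A` has `k` `R`-successors. So the
admissible pairs correspond to the `k`-subsets of `Δ`.
-/

open Finset

namespace SuccessorCount

variable {α : Type*} [Fintype α] [DecidableEq α]

def successors (B : Finset (α × α)) (x : α) : Finset α := univ.filter fun y => (x, y) ∈ B

lemma mem_successors {B : Finset (α × α)} {x y : α} : y ∈ successors B x ↔ (x, y) ∈ B := by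
  simp [successors]

def redirect (A : Finset α) (R : Finset (α × α)) (U : Finset α) : Finset (α × α) :=
  univ.filter fun q => if q.1 ∈ A then q.2 ∈ U else q ∈ R

variable {A : Finset α} {R : Finset (α × α)} {U : Finset α} {x : α}

lemma mem_redirect {y : α} :
    (x, y) ∈ redirect A R U ↔ if x ∈ A then y ∈ U else (x, y) ∈ R := by
  simp [redirect]

lemma successors_redirect_of_mem (hx : x ∈ A) : successors (redirect A R U) x = U := by
  ext y
  simp [mem_successors, mem_redirect, hx]

lemma successors_redirect_of_notMem (hx : x ∉ A) :
    successors (redirect A R U) x = successors R x := by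
  ext y
  simp [mem_successors, mem_redirect, hx]

def IsAdmissible (k : ℕ) (A : Finset α) (R : Finset (α × α))
    (p : Finset α × Finset (α × α)) : Prop :=
  p.1.card = k ∧
    (∀ x : α, (successors p.2 x).card = k) ∧
    (∀ x ∈ A, ∀ y : α, (x, y) ∈ p.2 → y ∈ p.1) ∧
    (∀ x : α, x ∉ A → ∀ y : α, ((x, y) ∈ R ↔ (x, y) ∈ p.2))

variable {k : ℕ} {B : Finset (α × α)}

lemma eq_redirect_of_isAdmissible (h : IsAdmissible k A R (U, B)) : B = redirect A R U := by
  obtain ⟨hU, hB, hBU, hBR⟩ := h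
  ext ⟨x, y⟩
  rw [mem_redirect]
  split_ifs with hx
  · have hsub : successors B x ⊆ U := fun z hz => hBU x hx z (mem_successors.1 hz)
    have hfull : successors B x = U := eq_of_subset_of_card_le hsub (by rw [hB, hU])
    rw [← hfull, mem_successors]
  · exact (hBR x hx y).symm

lemma isAdmissible_redirect (hR : ∀ x, x ∉ A → (successors R x).card = k) (hU : U.card = k) :
    IsAdmissible k A R (U, redirect A R U) := by
  refine ⟨hU, fun x => ?_, fun x hx y hy => ?_, fun x hx y => ?_⟩
  · by_cases hx : x ∈ A
    · rw [successors_redirect_of_mem hx, hU]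
    · rw [successors_redirect_of_notMem hx, hR x hx]
  · simpa [mem_redirect, hx] using hy
  · simp [mem_redirect, hx]

def admissibleEquiv (hR : ∀ x, x ∉ A → (successors R x).card = k) :
    {p // IsAdmissible k A R p} ≃ {U : Finset α // U.card = k} where
  toFun p := ⟨p.1.1, p.2.1⟩
  invFun U := ⟨(U.1, redirect A R U.1), isAdmissible_redirect hR U.2⟩
  left_inv p := Subtype.ext (Prod.ext rfl (eq_redirect_of_isAdmissible p.2).symm)
  right_inv _ := rfl

end SuccessorCount

theorem stmt_7_general {α : Type*} [Fintype α] [DecidableEq α] (k : ℕ)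
    (R : Finset (α × α)) (A : Finset α)
    (hR : ∀ x : α, x ∉ A → (Finset.univ.filter fun y => (x, y) ∈ R).card = k) :
    Nat.card {p : Finset α × Finset (α × α) //
        p.1.card = k ∧
        (∀ x : α, (Finset.univ.filter fun y => (x, y) ∈ p.2).card = k) ∧
        (∀ x ∈ A, ∀ y : α, (x, y) ∈ p.2 → y ∈ p.1) ∧
        (∀ x : α, x ∉ A → ∀ y : α, ((x, y) ∈ R ↔ (x, y) ∈ p.2))} =
      (Fintype.card α).choose k := by
  calc _ = Nat.card {U : Finset α // U.card = k} := Nat.card_congr (SuccessorCount.admissibleEquiv hR)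
    _ = _ := by rw [Nat.card_eq_fintype_card, Fintype.card_finset_len]

theorem stmt_7 {α : Type*} [Fintype α] [DecidableEq α] (k : ℕ) (hk : k ≤ Fintype.card α)
    (R : Finset (α × α)) (A : Finset α)
    (hR : ∀ x : α, x ∉ A → (Finset.univ.filter fun y => (x, y) ∈ R).card = k) :
    Nat.card {p : Finset α × Finset (α × α) //
        p.1.card = k ∧
        (∀ x : α, (Finset.univ.filter fun y => (x, y) ∈ p.2).card = k) ∧
        (∀ x ∈ A, ∀ y : α, (x, y) ∈ p.2 → y ∈ p.1) ∧
        (∀ x : α, x ∉ A → ∀ y : α, ((x, y) ∈ R ↔ (x, y) ∈ p.2))} =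
      (Fintype.card α).choose k :=
  stmt_7_general k R A hR
end

section
/- Let m, n be natural numbers with m ≤ n. The number of functions f : {1,…,m} → {1,…,n} such that f(f(x)) ≠ x whenever f(x) ∈ {1,…,m} equals F(m,n) = Σ_{i=0}^{⌊m/2⌋} (-1)^i (n-1)^{m-2i} C(m,2i) (2i)!/(2^i i!). -/
open Finset

private def AI (n m : ℕ) (f : Fin m → Fin n) : Prop :=
  ∀ x : Fin m, ∀ h : (f x : ℕ) < m, (f ⟨(f x : ℕ), h⟩ : ℕ) ≠ (x : ℕ)

private theorem AI_restrict {n M : ℕ} {f : Fin (M + 1) → Fin n} (hf : AI n (M + 1) f) :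
    AI n M (fun i : Fin M => f i.castSucc) := by
  intro x h
  simp only at h ⊢
  have h2 : (f x.castSucc : ℕ) < M + 1 := Nat.lt_succ_of_lt h
  have key := hf x.castSucc h2
  have heq : (⟨(f x.castSucc : ℕ), h2⟩ : Fin (M + 1)) =
      (⟨(f x.castSucc : ℕ), h⟩ : Fin M).castSucc := by
    simp [Fin.ext_iff]
  rw [heq] at key
  simpa using key

private theorem AI_zero (n : ℕ) : Nat.card {f : Fin 0 → Fin n // AI n 0 f} = 1 := by
  have : Unique {f : Fin 0 → Fin n // AI n 0 f} :=
    { default := ⟨finZeroElim, fun x => x.elim0⟩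
      uniq := fun a => by
        apply Subtype.ext
        funext x
        exact x.elim0 }
  exact Nat.card_unique

private theorem AI_one {n : ℕ} (hn : 1 ≤ n) :
    Nat.card {f : Fin 1 → Fin n // AI n 1 f} = n - 1 := by
  have e : {f : Fin 1 → Fin n // AI n 1 f} ≃ {v : Fin n // v ≠ ⟨0, hn⟩} :=
    { toFun := fun f => ⟨f.1 0, by
        intro hv
        have h : (f.1 0 : ℕ) < 1 := by rw [hv]; exact Nat.zero_lt_one
        have hkey := f.2 0 h
        have h0 : (⟨(f.1 0 : ℕ), h⟩ : Fin 1) = 0 := Subsingleton.elim _ _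
        rw [h0] at hkey
        apply hkey
        rw [hv]
        simp⟩
      invFun := fun v => ⟨fun _ => v.1, by
        intro x h
        simp only at h ⊢
        intro hc
        apply v.2
        apply Fin.ext
        simp only [Fin.val_zero] at *
        omega⟩
      left_inv := fun f => by
        apply Subtype.ext
        funext x
        have : x = 0 := Subsingleton.elim _ _
        rw [this]
      right_inv := fun v => rfl }
  rw [Nat.card_congr e]
  rw [Nat.card_eq_fintype_card]
  rw [Fintype.card_subtype_compl]
  simp

section Rec

variable {n m : ℕ} (hmn : m + 2 ≤ n)

private def tp : Fin n := ⟨m + 1, hmn⟩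

private theorem AI_snoc1 {g : Fin (m + 1) → Fin n} (hg : AI n (m + 1) g) {v : Fin n}
    (hv1 : v ≠ tp hmn) (hv2 : ∀ h : (v : ℕ) < m + 1, g ⟨v, h⟩ ≠ tp hmn) :
    AI n (m + 2) (Fin.snoc g v) := by
  intro x hx
  induction x using Fin.lastCases with
  | last =>
      have hv' : (v : ℕ) < m + 2 := by simpa [Fin.snoc_last] using hx
      rcases Nat.lt_or_ge (v : ℕ) (m + 1) with h1 | h1
      · have heq : (⟨_, hx⟩ : Fin (m + 2)) =
            (⟨(v : ℕ), h1⟩ : Fin (m + 1)).castSucc := by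
          simp [Fin.ext_iff, Fin.snoc_last]
        rw [heq, Fin.snoc_castSucc]
        intro hc
        apply hv2 h1
        apply Fin.ext
        simp only [tp, Fin.val_last] at hc ⊢
        exact hc
      · have hv : (v : ℕ) = m + 1 := by omega
        exact absurd (Fin.ext hv : v = tp hmn) hv1
  | cast y =>
      have hgy' : (g y : ℕ) < m + 2 := by simpa [Fin.snoc_castSucc] using hx
      rcases Nat.lt_or_ge (g y : ℕ) (m + 1) with h1 | h1
      · have heq : (⟨_, hx⟩ : Fin (m + 2)) =
            (⟨(g y : ℕ), h1⟩ : Fin (m + 1)).castSucc := by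
          simp [Fin.ext_iff, Fin.snoc_castSucc]
        rw [heq, Fin.snoc_castSucc]
        have := hg y h1
        simpa using this
      · have hgy : (g y : ℕ) = m + 1 := by omega
        have heq : (⟨_, hx⟩ : Fin (m + 2)) = Fin.last (m + 1) := by
          simp [Fin.ext_iff, Fin.snoc_castSucc, hgy]
        rw [heq, Fin.snoc_last]
        simp only [Fin.coe_castSucc]
        intro hc
        apply hv2 (by omega : (v : ℕ) < m + 1)
        apply Fin.ext
        simp only [tp]
        rw [show ((⟨(v : ℕ), _⟩ : Fin (m+1)) : Fin (m+1)) = y from Fin.ext (by simpa using hc)]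
        exact hgy

private theorem tp_props {f : Fin (m + 2) → Fin n} (hf : AI n (m + 2) f) :
    f (Fin.last (m + 1)) ≠ tp hmn ∧
      ∀ h : (f (Fin.last (m + 1)) : ℕ) < m + 1,
        f (⟨(f (Fin.last (m + 1)) : ℕ), h⟩ : Fin (m + 1)).castSucc ≠ tp hmn := by
  constructor
  · intro hc
    have hlt : (f (Fin.last (m + 1)) : ℕ) < m + 2 := by rw [hc]; exact Nat.lt_succ_self _
    have key := hf (Fin.last (m + 1)) hlt
    have h2 : (⟨(f (Fin.last (m + 1)) : ℕ), hlt⟩ : Fin (m + 2)) = Fin.last (m + 1) := by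
      simp [Fin.ext_iff, hc, tp, Fin.castSucc_mk]
    rw [h2] at key
    exact key (by simp [hc, tp])
  · intro h hc
    have hwlt : (f ((⟨(f (Fin.last (m + 1)) : ℕ), h⟩ : Fin (m + 1)).castSucc) : ℕ) < m + 2 := by
      rw [hc]; simp [tp]
    have key := hf _ hwlt
    have h2 : (⟨_, hwlt⟩ : Fin (m + 2)) = Fin.last (m + 1) := by
      apply Fin.ext
      show (f _ : ℕ) = _
      rw [hc]
      simp [tp]
    rw [h2] at key
    exact key (by simp)

private def E1 : {f : Fin (m + 2) → Fin n // AI n (m + 2) f} ≃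
    {p : Fin n × {g : Fin (m + 1) → Fin n // AI n (m + 1) g} //
      ¬(p.1 = tp hmn ∨ ∃ h : (p.1 : ℕ) < m + 1, p.2.1 ⟨(p.1 : ℕ), h⟩ = tp hmn)} where
  toFun f := ⟨(f.1 (Fin.last (m + 1)), ⟨fun i => f.1 i.castSucc, AI_restrict f.2⟩), by
    push_neg
    exact ⟨(tp_props hmn f.2).1, (tp_props hmn f.2).2⟩⟩
  invFun p := ⟨Fin.snoc p.1.2.1 p.1.1, by
    have hp := p.2
    push_neg at hp
    exact AI_snoc1 hmn p.1.2.2 hp.1 hp.2⟩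
  left_inv f := by
    apply Subtype.ext
    exact Fin.snoc_init_self f.1
  right_inv p := by
    apply Subtype.ext
    apply Prod.ext
    · simp [Fin.snoc_last]
    · apply Subtype.ext
      funext i
      simp [Fin.snoc_castSucc]

end Rec

private theorem AI_conj {n M : ℕ} (hMn : M ≤ n) (σ : Fin n ≃ Fin n) (τ : Fin M ≃ Fin M)
    (compat : ∀ x : Fin M, σ (Fin.castLE hMn x) = Fin.castLE hMn (τ x))
    (hlt : ∀ y : Fin n, ((σ y : Fin n) : ℕ) < M ↔ (y : ℕ) < M)
    {g : Fin M → Fin n} (hg : AI n M g) : AI n M (fun x => σ (g (τ.symm x))) := by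
  intro x hx
  simp only at hx ⊢
  have hy : (g (τ.symm x) : ℕ) < M := (hlt _).mp hx
  have hσz : σ (g (τ.symm x)) = Fin.castLE hMn (τ ⟨(g (τ.symm x) : ℕ), hy⟩) :=
    compat ⟨(g (τ.symm x) : ℕ), hy⟩
  have hmk : (⟨(σ (g (τ.symm x)) : ℕ), hx⟩ : Fin M) = τ ⟨(g (τ.symm x) : ℕ), hy⟩ := by
    apply Fin.ext
    show (σ (g (τ.symm x)) : ℕ) = _
    rw [hσz]
    simp
  rw [hmk, Equiv.symm_apply_apply]
  have key := hg (τ.symm x) hy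
  set w := g (⟨(g (τ.symm x) : ℕ), hy⟩ : Fin M) with hw
  rcases Nat.lt_or_ge (w : ℕ) M with h1 | h1
  · have hσw : σ w = Fin.castLE hMn (τ ⟨(w : ℕ), h1⟩) := compat ⟨(w : ℕ), h1⟩
    rw [hσw]
    simp only [Fin.coe_castLE]
    intro hc
    have h3 : τ (⟨(w : ℕ), h1⟩ : Fin M) = τ (τ.symm x) := by
      rw [Equiv.apply_symm_apply]
      exact Fin.ext hc
    exact key (congrArg Fin.val (τ.injective h3))
  · have h2 : ¬ ((σ w : ℕ) < M) := fun hcon => h1.not_gt ((hlt w).mp hcon)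
    have hxM : (x : ℕ) < M := x.isLt
    omega

section Rec2

variable {n m : ℕ}

private def sigE (hmn : m + 2 ≤ n) (v : Fin (m + 1)) : Fin n ≃ Fin n :=
  Equiv.swap (Fin.castLE (by omega) v) ⟨m, by omega⟩

private def tauE (v : Fin (m + 1)) : Fin (m + 1) ≃ Fin (m + 1) :=
  Equiv.swap v (Fin.last m)

private theorem sig_compat (hmn : m + 2 ≤ n) (v : Fin (m + 1)) (x : Fin (m + 1)) :
    sigE hmn v (Fin.castLE (by omega) x) = Fin.castLE (by omega) (tauE v x) := by
  unfold sigE tauE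
  rcases eq_or_ne x v with rfl | hxv
  · rw [Equiv.swap_apply_left, Equiv.swap_apply_left]
    apply Fin.ext
    simp
  · rcases eq_or_ne x (Fin.last m) with rfl | hxl
    · have h1 : (Fin.castLE (by omega : m + 1 ≤ n) (Fin.last m)) = (⟨m, by omega⟩ : Fin n) := by
        apply Fin.ext; simp
      rw [h1, Equiv.swap_apply_right, Equiv.swap_apply_right]
    · have h1 : Fin.castLE (by omega : m + 1 ≤ n) x ≠ Fin.castLE (by omega) v :=
        fun hc => hxv (Fin.castLE_injective _ hc)
      have h2 : Fin.castLE (by omega : m + 1 ≤ n) x ≠ ⟨m, by omega⟩ := by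
        intro hc
        apply hxl
        apply Fin.ext
        simpa [Fin.ext_iff] using hc
      rw [Equiv.swap_apply_of_ne_of_ne h1 h2, Equiv.swap_apply_of_ne_of_ne hxv hxl]

private theorem sig_lt (hmn : m + 2 ≤ n) (v : Fin (m + 1)) (y : Fin n) :
    ((sigE hmn v y : Fin n) : ℕ) < m + 1 ↔ (y : ℕ) < m + 1 := by
  unfold sigE
  rcases eq_or_ne y (Fin.castLE (by omega) v) with rfl | h1
  · rw [Equiv.swap_apply_left]
    simp only [Fin.coe_castLE]
    constructor <;> intro <;> [exact v.isLt; omega]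
  · rcases eq_or_ne y ⟨m, by omega⟩ with rfl | h2
    · rw [Equiv.swap_apply_right]
      simp only [Fin.coe_castLE]
      constructor <;> intro <;> [omega; exact v.isLt]
    · rw [Equiv.swap_apply_of_ne_of_ne h1 h2]

private theorem sig_tp (hmn : m + 2 ≤ n) (v : Fin (m + 1)) :
    sigE hmn v (tp hmn) = tp hmn := by
  unfold sigE
  apply Equiv.swap_apply_of_ne_of_ne
  · intro hc
    have h := congrArg Fin.val hc
    simp [tp] at h
    have := v.isLt
    omega
  · intro hc
    have h := congrArg Fin.val hc
    simp [tp] at h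

private theorem tau_symm (v : Fin (m + 1)) : (tauE v).symm = tauE v := by
  unfold tauE
  exact Equiv.symm_swap _ _

private def E2v (hmn : m + 2 ≤ n) (v : Fin (m + 1)) :
    {g : {g : Fin (m + 1) → Fin n // AI n (m + 1) g} // g.1 v = tp hmn} ≃
      {g : {g : Fin (m + 1) → Fin n // AI n (m + 1) g} // g.1 (Fin.last m) = tp hmn} where
  toFun g := ⟨⟨fun x => sigE hmn v (g.1.1 ((tauE v).symm x)),
      AI_conj (by omega) _ _ (sig_compat hmn v) (sig_lt hmn v) g.1.2⟩, by
    simp only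
    rw [tau_symm]
    rw [show tauE v (Fin.last m) = v from Equiv.swap_apply_right _ _]
    rw [g.2, sig_tp]⟩
  invFun g := ⟨⟨fun x => sigE hmn v (g.1.1 ((tauE v).symm x)),
      AI_conj (by omega) _ _ (sig_compat hmn v) (sig_lt hmn v) g.1.2⟩, by
    simp only
    rw [tau_symm]
    rw [show tauE v v = Fin.last m from Equiv.swap_apply_left _ _]
    rw [g.2, sig_tp]⟩
  left_inv g := by
    apply Subtype.ext
    apply Subtype.ext
    funext x
    simp only [tau_symm, tauE, sigE, Equiv.symm_swap, Equiv.swap_apply_self]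
  right_inv g := by
    apply Subtype.ext
    apply Subtype.ext
    funext x
    simp only [tau_symm, tauE, sigE, Equiv.symm_swap, Equiv.swap_apply_self]

private def Elast (hmn : m + 2 ≤ n) :
    {g : {g : Fin (m + 1) → Fin n // AI n (m + 1) g} // g.1 (Fin.last m) = tp hmn} ≃
      {h : Fin m → Fin n // AI n m h} where
  toFun g := ⟨fun i => g.1.1 i.castSucc, AI_restrict g.1.2⟩
  invFun h := ⟨⟨Fin.snoc h.1 (tp hmn), by
    intro x hx
    induction x using Fin.lastCases with
    | last =>
        rw [Fin.snoc_last] at hx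
        simp [tp] at hx
    | cast y =>
        have hy : (h.1 y : ℕ) < m + 1 := by simpa [Fin.snoc_castSucc] using hx
        rcases Nat.lt_or_ge (h.1 y : ℕ) m with h1 | h1
        · have heq : (⟨_, hx⟩ : Fin (m + 1)) = (⟨(h.1 y : ℕ), h1⟩ : Fin m).castSucc := by
            simp [Fin.ext_iff, Fin.snoc_castSucc]
          rw [heq, Fin.snoc_castSucc]
          have := h.2 y h1
          simpa using this
        · have heq : (⟨_, hx⟩ : Fin (m + 1)) = Fin.last m := by
            simp [Fin.ext_iff, Fin.snoc_castSucc]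
            omega
          rw [heq, Fin.snoc_last]
          have : (y : ℕ) < m := y.isLt
          simp [tp]
          omega⟩, by simp [Fin.snoc_last]⟩
  left_inv g := by
    apply Subtype.ext
    apply Subtype.ext
    simp only
    conv_rhs => rw [← Fin.snoc_init_self g.1.1]
    rw [g.2]
    rfl
  right_inv h := by
    apply Subtype.ext
    funext i
    simp [Fin.snoc_castSucc]

end Rec2

section Rec3

variable {n m : ℕ}

private def EQ (hmn : m + 2 ≤ n) :
    {p : Fin n × {g : Fin (m + 1) → Fin n // AI n (m + 1) g} // p.1 = tp hmn} ≃
      {g : Fin (m + 1) → Fin n // AI n (m + 1) g} where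
  toFun p := p.1.2
  invFun g := ⟨(tp hmn, g), rfl⟩
  left_inv p := by
    apply Subtype.ext
    apply Prod.ext
    · exact p.2.symm
    · rfl
  right_inv g := rfl

private noncomputable def ER (hmn : m + 2 ≤ n) :
    {p : Fin n × {g : Fin (m + 1) → Fin n // AI n (m + 1) g} //
        ∃ h : (p.1 : ℕ) < m + 1, p.2.1 ⟨(p.1 : ℕ), h⟩ = tp hmn} ≃
      Fin (m + 1) × {h : Fin m → Fin n // AI n m h} := by
  refine Equiv.trans (Equiv.trans ?_ (Equiv.sigmaCongrRight
    (fun v => (E2v hmn v).trans (Elast hmn)))) (Equiv.sigmaEquivProd _ _)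
  exact
    { toFun := fun p => ⟨⟨(p.1.1 : ℕ), p.2.choose⟩, ⟨p.1.2, p.2.choose_spec⟩⟩
      invFun := fun q => ⟨(Fin.castLE (by omega) q.1, q.2.1), by
        refine ⟨by simpa using q.1.isLt, ?_⟩
        have heq : (⟨((Fin.castLE (by omega : m + 1 ≤ n) q.1 : Fin n) : ℕ),
            by simpa using q.1.isLt⟩ : Fin (m + 1)) = q.1 := Fin.ext (by simp)
        rw [heq]
        exact q.2.2⟩
      left_inv := fun p => by
        apply Subtype.ext
        apply Prod.ext
        · exact Fin.ext (by simp)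
        · rfl
      right_inv := fun q => rfl }

private theorem cnt_rec (hmn : m + 2 ≤ n) :
    Nat.card {f : Fin (m + 2) → Fin n // AI n (m + 2) f} +
        (m + 1) * Nat.card {f : Fin m → Fin n // AI n m f} =
      (n - 1) * Nat.card {g : Fin (m + 1) → Fin n // AI n (m + 1) g} := by
  classical
  set Q : Fin n × {g : Fin (m + 1) → Fin n // AI n (m + 1) g} → Prop :=
    fun p => p.1 = tp hmn with hQ
  set R : Fin n × {g : Fin (m + 1) → Fin n // AI n (m + 1) g} → Prop :=
    fun p => ∃ h : (p.1 : ℕ) < m + 1, p.2.1 ⟨(p.1 : ℕ), h⟩ = tp hmn with hR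
  have e1 : {p // Q p ∨ R p} ≃ {p // Q p} ⊕ {p // R p} :=
    { toFun := fun p => if h : Q p.1 then .inl ⟨p.1, h⟩ else .inr ⟨p.1, p.2.resolve_left h⟩
      invFun := fun s => s.elim (fun a => ⟨a.1, Or.inl a.2⟩) (fun b => ⟨b.1, Or.inr b.2⟩)
      left_inv := fun p => by
        beta_reduce
        by_cases h : Q p.1
        · rw [dif_pos h]
          rfl
        · rw [dif_neg h]
          rfl
      right_inv := fun s => by
        cases s with
        | inl a => exact dif_pos a.2
        | inr b =>
            have hnq : ¬ Q b.1 := by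
              intro hq
              obtain ⟨hb, -⟩ := b.2
              have hq' : (b.1.1 : Fin n) = tp hmn := hq
              rw [hq'] at hb
              simp [tp] at hb
            exact dif_neg hnq }
  have hsplit :
      Nat.card (Fin n × {g : Fin (m + 1) → Fin n // AI n (m + 1) g}) =
        Nat.card {p // Q p ∨ R p} + Nat.card {p // ¬(Q p ∨ R p)} := by
    rw [Nat.card_congr (Equiv.sumCompl (fun p => Q p ∨ R p)).symm, Nat.card_sum]
  have hQcard : Nat.card {p // Q p} =
      Nat.card {g : Fin (m + 1) → Fin n // AI n (m + 1) g} :=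
    Nat.card_congr (EQ hmn)
  have hRcard : Nat.card {p // R p} =
      (m + 1) * Nat.card {h : Fin m → Fin n // AI n m h} := by
    rw [Nat.card_congr (ER hmn), Nat.card_prod]
    simp [Nat.card_eq_fintype_card]
  have hCcard : Nat.card {p // ¬(Q p ∨ R p)} =
      Nat.card {f : Fin (m + 2) → Fin n // AI n (m + 2) f} :=
    (Nat.card_congr (E1 hmn)).symm
  have hor : Nat.card {p // Q p ∨ R p} =
      Nat.card {g : Fin (m + 1) → Fin n // AI n (m + 1) g} +
        (m + 1) * Nat.card {h : Fin m → Fin n // AI n m h} := by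
    rw [Nat.card_congr e1, Nat.card_sum, hQcard, hRcard]
  have hprod : Nat.card (Fin n × {g : Fin (m + 1) → Fin n // AI n (m + 1) g}) =
      n * Nat.card {g : Fin (m + 1) → Fin n // AI n (m + 1) g} := by
    rw [Nat.card_prod]
    simp [Nat.card_eq_fintype_card]
  rw [Nat.sub_mul, one_mul]
  rw [hprod, hor, hCcard] at hsplit
  set a := Nat.card {f : Fin (m + 2) → Fin n // AI n (m + 2) f}
  set b := (m + 1) * Nat.card {h : Fin m → Fin n // AI n m h}
  set c := Nat.card {g : Fin (m + 1) → Fin n // AI n (m + 1) g}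
  set Y := n * c
  omega

end Rec3

open Polynomial Finset
open scoped Nat

private theorem deriv_hermite : ∀ m : ℕ, derivative (hermite (m + 1)) = (m + 1) * hermite m := by
  intro m
  induction m with
  | zero => simp [hermite_one, hermite_zero]
  | succ k ih =>
      have h2 : derivative ((k : Polynomial ℤ) + 1) = 0 := by simp
      rw [hermite_succ (k + 1), derivative_sub, derivative_mul, derivative_X, ih,
        derivative_mul, h2, hermite_succ k]
      push_cast
      ring

private theorem hermite_eval_rec (m : ℕ) (y : ℤ) :
    (hermite (m + 2)).eval y = y * (hermite (m + 1)).eval y - (m + 1) * (hermite m).eval y := by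
  rw [show m + 2 = (m + 1) + 1 from rfl, hermite_succ, deriv_hermite]
  simp

private theorem dfact_eq (i : ℕ) : (2 * i).factorial / (2 ^ i * i.factorial) = (2 * i - 1)‼ := by
  rcases i with _ | j
  · simp
  · have h1 : (2 * (j + 1)) = (2 * (j + 1) - 1) + 1 := by omega
    have h2 : (2 * (j + 1)).factorial = (2 * (j + 1))‼ * (2 * (j + 1) - 1)‼ := by
      rw [h1, Nat.factorial_eq_mul_doubleFactorial, ← h1]
    rw [h2, Nat.doubleFactorial_two_mul]
    rw [Nat.mul_div_cancel_left]
    positivity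

private theorem hermite_eval_sum (m : ℕ) (y : ℤ) :
    (hermite m).eval y =
      ∑ i ∈ Finset.range (m / 2 + 1),
        (-1 : ℤ) ^ i * y ^ (m - 2 * i) * (m.choose (2 * i)) *
          ((2 * i).factorial / (2 ^ i * i.factorial) : ℕ) := by
  rw [eval_eq_sum_range' (n := m + 1) (by rw [natDegree_hermite]; omega)]
  rw [← Finset.sum_filter_of_ne (p := fun k => Even (m + k))
    (by
      intro k _ hk
      by_contra hodd
      rw [coeff_hermite_of_odd_add (Nat.not_even_iff_odd.mp hodd)] at hk
      simp at hk)]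
  refine Finset.sum_nbij' (i := fun k => (m - k) / 2) (j := fun i => m - 2 * i) ?_ ?_ ?_ ?_ ?_
  · intro k hk
    simp only [Finset.mem_filter, Finset.mem_range, Nat.even_iff] at *
    omega
  · intro i hi
    simp only [Finset.mem_filter, Finset.mem_range, Nat.even_iff] at *
    omega
  · intro k hk
    simp only [Finset.mem_filter, Finset.mem_range, Nat.even_iff] at hk
    beta_reduce
    omega
  · intro i hi
    simp only [Finset.mem_range] at hi
    beta_reduce
    omega
  · intro k hk
    simp only [Finset.mem_filter, Finset.mem_range, Nat.even_iff] at hk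
    beta_reduce
    set i := (m - k) / 2 with hidef
    have h2i : 2 * i ≤ m := by omega
    have hk' : m - 2 * i = k := by omega
    rw [← hk']
    have hco : coeff (hermite m) (m - 2 * i) =
        (-1) ^ i * (2 * i - 1)‼ * Nat.choose m (m - 2 * i) := by
      have := coeff_hermite_explicit i (m - 2 * i)
      rwa [show 2 * i + (m - 2 * i) = m by omega] at this
    rw [hco, Nat.choose_symm h2i, dfact_eq]
    push_cast
    ring

theorem stmt_10 (m n : ℕ) (hmn : m ≤ n) :
    (Nat.card {f : Fin m → Fin n //
        ∀ x : Fin m, ∀ h : (f x : ℕ) < m, (f ⟨(f x : ℕ), h⟩ : ℕ) ≠ (x : ℕ)} : ℤ) =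
      ∑ i ∈ Finset.range (m / 2 + 1),
        (-1 : ℤ) ^ i * ((n : ℤ) - 1) ^ (m - 2 * i) * (m.choose (2 * i)) *
          ((2 * i).factorial / (2 ^ i * i.factorial) : ℕ) := by
  have key : ∀ M : ℕ, M ≤ n →
      (Nat.card {f : Fin M → Fin n // AI n M f} : ℤ) = (hermite M).eval ((n : ℤ) - 1) := by
    intro M
    induction M using Nat.strong_induction_on with
    | _ M ih =>
      rcases M with _ | (_ | M)
      · intro _
        rw [AI_zero, hermite_zero]
        simp
      · intro h1
        rw [AI_one h1, hermite_one, eval_X, Nat.cast_sub h1, Nat.cast_one]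
      · intro h2
        have hrec := cnt_rec (n := n) (m := M) h2
        have e0 := ih M (by omega) (by omega)
        have e1 := ih (M + 1) (by omega) (by omega)
        have hh := hermite_eval_rec M ((n : ℤ) - 1)
        have hcast := congrArg (fun k : ℕ => (k : ℤ)) hrec
        push_cast [Nat.cast_sub (show 1 ≤ n by omega)] at hcast
        rw [e0, e1] at hcast
        push_cast
        linarith [hcast, hh]
  exact (key m hmn).trans (hermite_eval_sum m ((n : ℤ) - 1))
end
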